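/- Let (ω, α) be a Jacobi sequence and let A, B, C be the annihilation, preservation and creation operators on finitely supported sequences indexed by ℕ. Then the following are equivalent: (i) the vectors (AC − CA)e_n/(ω n + ω(n−1)) and (AB − BA)e_n/(ω n + ω(n−1)) both tend to 0 in ℓ²-norm as n → ∞; (ii) lim_{n→∞} ω n / ω(n−1) = 1 and lim_{n→∞} (α n − α(n−1))/√(ω n + ω(n−1)) = 0. -/

import Mathlib

open Filter

/-- The annihilation operator: `A e_0 = 0`, `A e_n = √(ω (n-1))·e_{n-1}` for `n ≥ 1`. -/
noncomputable def annihilationOp (ω : ℕ → ℝ) : (ℕ →₀ ℝ) →ₗ[ℝ] (ℕ →₀ ℝ) :=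
  Finsupp.lsum ℝ fun n => LinearMap.toSpanSingleton ℝ (ℕ →₀ ℝ)
    (if n = 0 then 0 else Real.sqrt (ω (n - 1)) • Finsupp.single (n - 1) 1)

/-- The preservation operator: `B e_n = α n·e_n`. -/
noncomputable def preservationOp (α : ℕ → ℝ) : (ℕ →₀ ℝ) →ₗ[ℝ] (ℕ →₀ ℝ) :=
  Finsupp.lsum ℝ fun n => LinearMap.toSpanSingleton ℝ (ℕ →₀ ℝ) (α n • Finsupp.single n 1)

/-- The creation operator: `C e_n = √(ω n)·e_{n+1}`. -/
noncomputable def creationOp (ω : ℕ → ℝ) : (ℕ →₀ ℝ) →ₗ[ℝ] (ℕ →₀ ℝ) :=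
  Finsupp.lsum ℝ fun n => LinearMap.toSpanSingleton ℝ (ℕ →₀ ℝ)
    (Real.sqrt (ω n) • Finsupp.single (n + 1) 1)

/-- The ℓ²-norm of a finitely supported real sequence. -/
noncomputable def l2norm (f : ℕ →₀ ℝ) : ℝ :=
  Real.sqrt (∑ n ∈ f.support, (f n) ^ 2)

/-
On a basis vector `e_n` with `n ≥ 1` the commutators are `[A, C] e_n = (ω n - ω (n-1)) e_n` and
`[A, B] e_n = √(ω (n-1)) (α n - α (n-1)) e_{n-1}`, so (i) says that
`(ω n - ω (n-1)) / (ω n + ω (n-1)) → 0` and `√(ω (n-1)) (α n - α (n-1)) / (ω n + ω (n-1)) → 0`.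
In terms of `r = ω n / ω (n-1)` the first sequence is `(r - 1) / (r + 1)`, which tends to `0`
exactly when `r → 1`. The second sequence is `(α n - α (n-1)) / √(ω n + ω (n-1))` times
`√(ω (n-1) / (ω n + ω (n-1))) = (r + 1)^(-1/2)`, a factor tending to `1 / √2` once `r → 1`.
-/

open Topology

section Limits

variable {ι : Type*} {l : Filter ι} {a b : ι → ℝ}

lemma tendsto_mul_nhds_zero_iff_of_tendsto_ne_zero {f c : ι → ℝ} {L : ℝ}
    (hc : ∀ i, c i ≠ 0) (hcL : Tendsto c l (𝓝 L)) (hL : L ≠ 0) :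
    Tendsto (fun i => f i * c i) l (𝓝 0) ↔ Tendsto f l (𝓝 0) := by
  refine ⟨fun hfc => ?_, fun hf => by simpa using hf.mul hcL⟩
  have hdiv : Tendsto (fun i => f i * c i / c i) l (𝓝 (0 / L)) := hfc.div hcL hL
  simpa only [mul_div_cancel_right₀ _ (hc _), zero_div] using hdiv

lemma tendsto_sub_div_add_nhds_zero_iff (ha : ∀ i, 0 < a i) (hb : ∀ i, 0 < b i) :
    Tendsto (fun i => (a i - b i) / (a i + b i)) l (𝓝 0) ↔
      Tendsto (fun i => a i / b i) l (𝓝 1) := by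
  have hab : ∀ i, a i + b i ≠ 0 := fun i => (add_pos (ha i) (hb i)).ne'
  constructor
  · intro hu
    have hr : Tendsto (fun i => (1 + (a i - b i) / (a i + b i)) / (1 - (a i - b i) / (a i + b i)))
        l (𝓝 ((1 + 0) / (1 - 0))) := (hu.const_add 1).div (hu.const_sub 1) (by norm_num)
    rw [add_zero, sub_zero, div_one] at hr
    refine hr.congr fun i => ?_
    have h₁ : 1 + (a i - b i) / (a i + b i) = 2 * a i / (a i + b i) := by field_simp [hab i]; ring
    have h₂ : 1 - (a i - b i) / (a i + b i) = 2 * b i / (a i + b i) := by field_simp [hab i]; ring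
    rw [h₁, h₂, div_div_div_cancel_right₀ (hab i), mul_div_mul_left _ _ two_ne_zero]
  · intro hr
    have hu : Tendsto (fun i => (a i / b i - 1) / (a i / b i + 1)) l (𝓝 ((1 - 1) / (1 + 1))) :=
      (hr.sub_const 1).div (hr.add_const 1) (by norm_num)
    rw [sub_self, zero_div] at hu
    refine hu.congr fun i => ?_
    have := (hb i).ne'
    field_simp

lemma tendsto_sqrt_mul_div_add_nhds_zero_iff {δ : ι → ℝ} (ha : ∀ i, 0 < a i) (hb : ∀ i, 0 < b i)
    (hr : Tendsto (fun i => a i / b i) l (𝓝 1)) :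
    Tendsto (fun i => Real.sqrt (b i) * δ i / (a i + b i)) l (𝓝 0) ↔
      Tendsto (fun i => δ i / Real.sqrt (a i + b i)) l (𝓝 0) := by
  have hab : ∀ i, 0 < a i + b i := fun i => add_pos (ha i) (hb i)
  have hc : Tendsto (fun i => Real.sqrt ((a i / b i + 1)⁻¹)) l (𝓝 (Real.sqrt ((1 + 1)⁻¹))) :=
    ((hr.add_const 1).inv₀ (by norm_num)).sqrt
  rw [← tendsto_mul_nhds_zero_iff_of_tendsto_ne_zero (f := fun i => δ i / Real.sqrt (a i + b i))
    (fun i => ?_) hc (by positivity)]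
  · refine tendsto_congr fun i => ?_
    have := (hb i).ne'
    rw [div_add_one this, inv_div, Real.sqrt_div (hb i).le]
    field_simp
    rw [Real.sq_sqrt (hab i).le]
  · have : 0 < a i / b i + 1 := by have := div_pos (ha i) (hb i); linarith
    positivity

lemma l2norm_smul_single (c : ℝ) (k : ℕ) : l2norm (c • Finsupp.single k 1) = |c| := by
  rw [Finsupp.smul_single_one]
  rcases eq_or_ne c 0 with rfl | hc
  · simp [l2norm]
  · simp [l2norm, Finsupp.support_single, hc, Real.sqrt_sq_eq_abs]

lemma tendsto_l2norm_nhds_zero_iff_of_eventuallyEq_smul_single {x : ι → ℕ →₀ ℝ} {c : ι → ℝ}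
    {k : ι → ℕ} (h : ∀ᶠ i in l, x i = c i • Finsupp.single (k i) 1) :
    Tendsto (fun i => l2norm (x i)) l (𝓝 0) ↔ Tendsto c l (𝓝 0) := by
  rw [tendsto_zero_iff_abs_tendsto_zero c]
  refine tendsto_congr' (h.mono fun i hi => ?_)
  show l2norm (x i) = |c i|
  rw [hi, l2norm_smul_single]

end Limits

section Operators

variable {ω α : ℕ → ℝ}

lemma annihilationOp_single_succ (m : ℕ) :
    annihilationOp ω (Finsupp.single (m + 1) 1) = Real.sqrt (ω m) • Finsupp.single m 1 := by
  simp [annihilationOp]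

lemma preservationOp_single (m : ℕ) :
    preservationOp α (Finsupp.single m 1) = α m • Finsupp.single m 1 := by
  simp [preservationOp]

lemma creationOp_single (m : ℕ) :
    creationOp ω (Finsupp.single m 1) = Real.sqrt (ω m) • Finsupp.single (m + 1) 1 := by
  simp [creationOp]

lemma commutator_annihilationOp_creationOp_single (hω : ∀ n, 0 ≤ ω n) {n : ℕ} (hn : n ≠ 0) :
    (annihilationOp ω ∘ₗ creationOp ω - creationOp ω ∘ₗ annihilationOp ω) (Finsupp.single n 1) =
      (ω n - ω (n - 1)) • Finsupp.single n 1 := by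
  obtain ⟨m, rfl⟩ := Nat.exists_eq_add_one_of_ne_zero hn
  simp only [LinearMap.sub_apply, LinearMap.comp_apply, creationOp_single, map_smul,
    annihilationOp_single_succ, smul_smul, Real.mul_self_sqrt (hω _), add_tsub_cancel_right,
    sub_smul]

lemma commutator_annihilationOp_preservationOp_single {n : ℕ} (hn : n ≠ 0) :
    (annihilationOp ω ∘ₗ preservationOp α - preservationOp α ∘ₗ annihilationOp ω)
        (Finsupp.single n 1) =
      (Real.sqrt (ω (n - 1)) * (α n - α (n - 1))) • Finsupp.single (n - 1) 1 := by
  obtain ⟨m, rfl⟩ := Nat.exists_eq_add_one_of_ne_zero hn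
  simp only [LinearMap.sub_apply, LinearMap.comp_apply, preservationOp_single, map_smul,
    annihilationOp_single_succ, smul_smul, add_tsub_cancel_right]
  module

lemma tendsto_l2norm_commutator_annihilationOp_creationOp (hω : ∀ n, 0 ≤ ω n) :
    Tendsto (fun n : ℕ => l2norm ((1 / (ω n + ω (n - 1))) •
        ((annihilationOp ω ∘ₗ creationOp ω - creationOp ω ∘ₗ annihilationOp ω)
          (Finsupp.single n 1)))) atTop (𝓝 0) ↔
      Tendsto (fun n => (ω n - ω (n - 1)) / (ω n + ω (n - 1))) atTop (𝓝 0) :=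
  tendsto_l2norm_nhds_zero_iff_of_eventuallyEq_smul_single <|
    (eventually_ne_atTop 0).mono fun n hn => by
      rw [commutator_annihilationOp_creationOp_single hω hn, smul_smul, one_div_mul_eq_div]

lemma tendsto_l2norm_commutator_annihilationOp_preservationOp :
    Tendsto (fun n : ℕ => l2norm ((1 / (ω n + ω (n - 1))) •
        ((annihilationOp ω ∘ₗ preservationOp α - preservationOp α ∘ₗ annihilationOp ω)
          (Finsupp.single n 1)))) atTop (𝓝 0) ↔
      Tendsto (fun n => Real.sqrt (ω (n - 1)) * (α n - α (n - 1)) / (ω n + ω (n - 1))) atTop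
        (𝓝 0) :=
  tendsto_l2norm_nhds_zero_iff_of_eventuallyEq_smul_single <|
    (eventually_ne_atTop 0).mono fun n hn => by
      rw [commutator_annihilationOp_preservationOp_single hn, smul_smul, one_div_mul_eq_div]

end Operators

/-- The relative asymptotic commutativity condition (RAC1) is equivalent to
`ω n / ω (n-1) → 1` and `(α n − α (n-1)) / √(ω n + ω (n-1)) → 0`. -/
theorem RAC1_equiv_ratio_conditions (ω α : ℕ → ℝ) (hω : ∀ n, 0 < ω n) :
    (Tendsto (fun n : ℕ =>
        l2norm ((1 / (ω n + ω (n - 1))) •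
          ((annihilationOp ω ∘ₗ creationOp ω - creationOp ω ∘ₗ annihilationOp ω)
            (Finsupp.single n 1)))) atTop (nhds 0) ∧
     Tendsto (fun n : ℕ =>
        l2norm ((1 / (ω n + ω (n - 1))) •
          ((annihilationOp ω ∘ₗ preservationOp α - preservationOp α ∘ₗ annihilationOp ω)
            (Finsupp.single n 1)))) atTop (nhds 0))
    ↔
    (Tendsto (fun n : ℕ => ω n / ω (n - 1)) atTop (nhds 1) ∧
     Tendsto (fun n : ℕ => (α n - α (n - 1)) / Real.sqrt (ω n + ω (n - 1))) atTop (nhds 0)) := by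
  have hω' : ∀ n, 0 < ω (n - 1) := fun n => hω (n - 1)
  rw [tendsto_l2norm_commutator_annihilationOp_creationOp fun n => (hω n).le,
    tendsto_l2norm_commutator_annihilationOp_preservationOp,
    tendsto_sub_div_add_nhds_zero_iff hω hω']
  exact and_congr_right (tendsto_sqrt_mul_div_add_nhds_zero_iff hω hω')
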